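/- arXiv:1807.08256 — 2 statements merged into one kernel-verified Lean document; each statement's English description precedes it below -/
import Mathlib

section
/- Let α be a real number with α ≠ 0 and α ≠ 1, and let μ > 0, z > 0, and m_α be real numbers (real powers taken as rpow). Then the function ε ↦ (1/(α(α−1))) · ( ((1−ε)·m_α + ε·z^α) / ((1−ε)·μ + ε·z)^α − 1 ) has derivative at ε = 0 equal to (z^α − m_α)/(α(α−1)μ^α) − (m_α/((α−1)·μ^{α+1}))·(z − μ). -/
/-!
Contaminating `F` by `Δ_z` moves both the mean and the `α`-th moment along straight lines in `ε`,
with velocities `z - μ` and `z ^ α - m_α`. The influence function is therefore the quotient-rule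
derivative of `m_α(ε) / μ(ε) ^ α` at `ε = 0`, scaled by `1 / (α (α - 1))`; the constant `- 1` does
not contribute.
-/

open Real

theorem hasDerivAt_mixture {𝕜 : Type*} [NontriviallyNormedField 𝕜] (a b x : 𝕜) :
    HasDerivAt (fun ε : 𝕜 => (1 - ε) * a + ε * b) (b - a) x := by
  have hline : (fun ε : 𝕜 => (1 - ε) * a + ε * b) = AffineMap.lineMap a b :=
    funext fun ε => (AffineMap.lineMap_apply_ring a b ε).symm
  exact hline ▸ AffineMap.hasDerivAt_lineMap

theorem hasDerivAt_mixture_div_rpow_mixture (m w μ z α : ℝ) (hμ : 0 < μ) :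
    HasDerivAt (fun ε : ℝ => ((1 - ε) * m + ε * w) / ((1 - ε) * μ + ε * z) ^ α)
      ((w - m) / μ ^ α - α * m * (z - μ) / μ ^ (α + 1)) 0 := by
  have hpow : HasDerivAt (fun ε : ℝ => ((1 - ε) * μ + ε * z) ^ α)
      ((z - μ) * α * μ ^ (α - 1)) 0 := by
    simpa using (hasDerivAt_mixture μ z 0).rpow_const (p := α) (Or.inl (by simpa using hμ.ne'))
  have hquot := (hasDerivAt_mixture m w 0).div hpow (by simpa using (rpow_pos_of_pos hμ α).ne')
  refine hquot.congr_deriv ?_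
  simp only [sub_zero, zero_mul, add_zero, one_mul]
  rw [rpow_add hμ, rpow_sub hμ, rpow_one]
  field_simp

theorem influence_function_GE_general (α μ z mα : ℝ)
    (hα0 : α ≠ 0) (hμ : 0 < μ) :
    HasDerivAt
      (fun ε : ℝ =>
        (1 / (α * (α - 1))) *
          (((1 - ε) * mα + ε * z ^ α) / ((1 - ε) * μ + ε * z) ^ α - 1))
      ((z ^ α - mα) / (α * (α - 1) * μ ^ α)
        - (mα / ((α - 1) * μ ^ (α + 1))) * (z - μ))
      0 := by
  refine (((hasDerivAt_mixture_div_rpow_mixture mα (z ^ α) μ z α hμ).sub_const 1).const_mul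
    (1 / (α * (α - 1)))).congr_deriv ?_
  simp only [div_eq_mul_inv, mul_inv, one_mul]
  linear_combination -(mα * (z - μ) * (α - 1)⁻¹ * (μ ^ (α + 1))⁻¹) * (mul_inv_cancel₀ hα0)

theorem influence_function_GE (α μ z mα : ℝ)
    (hα0 : α ≠ 0) (hα1 : α ≠ 1) (hμ : 0 < μ) (hz : 0 < z) :
    HasDerivAt
      (fun ε : ℝ =>
        (1 / (α * (α - 1))) *
          (((1 - ε) * mα + ε * z ^ α) / ((1 - ε) * μ + ε * z) ^ α - 1))
      ((z ^ α - mα) / (α * (α - 1) * μ ^ α)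
        - (mα / ((α - 1) * μ ^ (α + 1))) * (z - μ))
      0 :=
  influence_function_GE_general α μ z mα hα0 hμ
end

section
/- Let μ > 0, z > 0, and ν be real numbers. Then the function ε ↦ 1 − exp( ((1−ε)·ν + ε·log z) − log((1−ε)·μ + ε·z) ) has derivative at ε = 0 equal to (exp(ν)/μ) · ( (z − μ)/μ − (log z − ν) ). -/
/-!
Contaminating by `Δ_z` moves both the mean and `E log X` along the segments `ε ↦ lineMap μ z ε`
and `ε ↦ lineMap ν (log z) ε`, with velocities `z - μ` and `log z - ν`. The chain rule through
`1 - exp (ℓ - log m)` then gives the influence function, using `exp (ν - log μ) = e^ν / μ`.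
-/

open Real AffineMap

theorem HasDerivAt.one_sub_exp_sub_log {m l : ℝ → ℝ} {m' l' x : ℝ} (hm : HasDerivAt m m' x)
    (hl : HasDerivAt l l' x) (hmx : 0 < m x) :
    HasDerivAt (fun ε => 1 - Real.exp (l ε - Real.log (m ε)))
      (Real.exp (l x) / m x * (m' / m x - l')) x :=
  ((hl.sub (hm.log hmx.ne')).exp.const_sub 1).congr_deriv <| by
    rw [Pi.sub_apply, exp_sub, exp_log hmx]; ring

theorem hasDerivAt_one_sub_mul_add_mul (a b x : ℝ) :
    HasDerivAt (fun ε : ℝ => (1 - ε) * a + ε * b) (b - a) x := by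
  have hmix : (fun ε : ℝ => (1 - ε) * a + ε * b) = lineMap a b :=
    funext fun ε => (lineMap_apply_ring a b ε).symm
  rw [hmix]
  exact hasDerivAt_lineMap

theorem influence_function_Champernowne_general (μ z ν : ℝ) (hμ : 0 < μ) :
    HasDerivAt
      (fun ε : ℝ =>
        1 - Real.exp (((1 - ε) * ν + ε * Real.log z)
              - Real.log ((1 - ε) * μ + ε * z)))
      ((Real.exp ν / μ) * ((z - μ) / μ - (Real.log z - ν)))
      0 := by
  have hmean := hasDerivAt_one_sub_mul_add_mul μ z 0
  have hlogMean := hasDerivAt_one_sub_mul_add_mul ν (log z) 0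
  simpa using hmean.one_sub_exp_sub_log hlogMean (by simpa using hμ)

theorem influence_function_Champernowne (μ z ν : ℝ) (hμ : 0 < μ) (hz : 0 < z) :
    HasDerivAt
      (fun ε : ℝ =>
        1 - Real.exp (((1 - ε) * ν + ε * Real.log z)
              - Real.log ((1 - ε) * μ + ε * z)))
      ((Real.exp ν / μ) * ((z - μ) / μ - (Real.log z - ν)))
      0 :=
  influence_function_Champernowne_general μ z ν hμ
end
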